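/- Let G be a finite abelian group of odd order with a rainbow-free 3-coloring {A, B, C}, and suppose B is a translate of A with |A| = |B| = 3, i.e., B = A + x with A = {0, a, a'}. Then −x ∈ B, and it follows that A = {−2x, 0, 2x} and B = {−x, x, 3x}, so both A and B are arithmetic progressions with the same common difference; in particular |A + B| ≤ 5 < |A| + |B|. -/

import Mathlib

/-!
Odd order makes `g ↦ 2 • g` injective, so `x`, `2 • x` and `4 • x` are all nonzero.
Rainbow-freeness applied to the progressions `(x, 0, -x)` and `(0, x, 2 • x)`, whose endpoints
lie in `A` and `B`, forces `-x` and `2 • x` into `A ∪ B`; since `B = x + A` is disjoint from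
`A ∋ 0`, this pins down `-x ∈ B` and `2 • x ∈ A`. Then `A` contains the three distinct elements
`-2x, 0, 2x`, so, having at most three elements, it equals them, and `B = x + A = {-x, x, 3x}`;
the sumset `A + B` lies in `{-3x, -x, x, 3x, 5x}`.
-/

open Pointwise

/-- A 3-coloring with classes `A`, `B`, `C` is rainbow-free if no 3-term
arithmetic progression `(x, y, z)` (i.e. `x + z = 2 • y`) has its members in
three pairwise distinct color classes. -/
def RainbowFree {G : Type*} [AddCommGroup G] (A B C : Set G) : Prop :=
  ∀ x y z : G, x + z = 2 • y →
    ¬ ((x ∈ A ∧ y ∈ B ∧ z ∈ C) ∨ (x ∈ A ∧ y ∈ C ∧ z ∈ B) ∨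
       (x ∈ B ∧ y ∈ A ∧ z ∈ C) ∨ (x ∈ B ∧ y ∈ C ∧ z ∈ A) ∨
       (x ∈ C ∧ y ∈ A ∧ z ∈ B) ∨ (x ∈ C ∧ y ∈ B ∧ z ∈ A))

theorem two_nsmul_ne_zero_of_odd_card {G : Type*} [AddGroup G] (hodd : Odd (Nat.card G)) {g : G}
    (hg : g ≠ 0) : 2 • g ≠ 0 := by
  simpa using hodd.coprime_two_right.nsmul_right_bijective.injective.ne hg

theorem ncard_neg_zero_self_eq_three {G : Type*} [AddGroup G] {y : G} (hy : y ≠ 0) (h2y : 2 • y ≠ 0) :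
    ({-y, 0, y} : Set G).ncard = 3 := by
  refine Set.ncard_eq_three.mpr ⟨-y, 0, y, neg_ne_zero.mpr hy, fun h ↦ h2y ?_, hy.symm, rfl⟩
  rw [two_nsmul, neg_eq_iff_add_eq_zero.mp h]

theorem ncard_le_three {α : Type*} (a b c : α) : ({a, b, c} : Set α).ncard ≤ 3 :=
  (Set.ncard_insert_le _ _).trans <| Nat.succ_le_succ <|
    (Set.ncard_insert_le _ _).trans (by rw [Set.ncard_singleton])

theorem ncard_ap_add_ap_le_five {G : Type*} [AddCommGroup G] (x : G) :
    (({-(2 • x), 0, 2 • x} : Set G) + {-x, x, 3 • x}).ncard ≤ 5 := by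
  have himage : ({-(2 • x), 0, 2 • x} : Set G) + {-x, x, 3 • x} =
      zmultiplesHom G x '' (({-2, 0, 2} : Set ℤ) + {-1, 1, 3}) := by
    simp only [Set.image_add, Set.image_insert_eq, Set.image_singleton, zmultiplesHom_apply,
      neg_zsmul, ofNat_zsmul, zero_nsmul, one_nsmul]
  have hcard : (({-2, 0, 2} : Set ℤ) + {-1, 1, 3}).ncard = 5 := by
    rw [← Finset.coe_pair, ← Finset.coe_insert, ← Finset.coe_pair, ← Finset.coe_insert,
      ← Finset.coe_add, Set.ncard_coe_finset]
    decide
  rw [himage, ← hcard]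
  exact Set.ncard_image_le (Set.toFinite _)

namespace RainbowFree

variable {G : Type*} [AddCommGroup G] {A B C : Set G}

theorem swap (hrf : RainbowFree A B C) : RainbowFree B A C :=
  fun u v w huw hmem ↦ hrf u v w huw (by tauto)

theorem mem_union_of_mem_of_mem (hrf : RainbowFree A B C) (hcover : A ∪ B ∪ C = Set.univ)
    {u v w : G} (hu : u ∈ A) (hv : v ∈ B) (huw : u + w = 2 • v) : w ∈ A ∪ B := by
  by_contra hw
  have hwC : w ∈ C := (hcover ▸ Set.mem_univ w : w ∈ A ∪ B ∪ C).resolve_left hw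
  exact hrf u v w huw (Or.inl ⟨hu, hv, hwC⟩)

theorem neg_mem_of_eq_vadd (hrf : RainbowFree A B C) (hcover : A ∪ B ∪ C = Set.univ)
    (hAB : Disjoint A B) {x : G} (hB : B = x +ᵥ A) (h0A : (0 : G) ∈ A) : -x ∈ B := by
  have hxB : x ∈ B := by simpa [hB] using Set.vadd_mem_vadd_set (a := x) h0A
  have hunion : -x ∈ B ∪ A :=
    hrf.swap.mem_union_of_mem_of_mem (by rwa [Set.union_comm B A]) hxB h0A (by simp)
  refine hunion.resolve_right fun hA ↦ hAB.notMem_of_mem_left h0A ?_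
  simpa [hB] using Set.vadd_mem_vadd_set (a := x) hA

theorem two_nsmul_mem_of_eq_vadd (hrf : RainbowFree A B C) (hcover : A ∪ B ∪ C = Set.univ)
    (hAB : Disjoint A B) {x : G} (hB : B = x +ᵥ A) (h0A : (0 : G) ∈ A) : 2 • x ∈ A := by
  have hxB : x ∈ B := by simpa [hB] using Set.vadd_mem_vadd_set (a := x) h0A
  have hunion : 2 • x ∈ A ∪ B := hrf.mem_union_of_mem_of_mem hcover h0A hxB (zero_add _)
  refine hunion.resolve_right fun h2xB ↦ hAB.notMem_of_mem_left ?_ hxB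
  rw [hB, Set.mem_vadd_set_iff_neg_vadd_mem] at h2xB
  rwa [vadd_eq_add, two_nsmul, neg_add_cancel_left] at h2xB

end RainbowFree

theorem translate_class_structure_general {G : Type*} [AddCommGroup G] [Fintype G]
    (hodd : Odd (Fintype.card G)) (A B C : Set G)
    (hcover : A ∪ B ∪ C = Set.univ)
    (hAB : Disjoint A B)
    (hrf : RainbowFree A B C)
    (a a' x : G) (hx : x ≠ 0)
    (hA : A = {0, a, a'}) (hB : B = {x} + A) :
    -x ∈ B ∧ A = {-(2 • x), 0, 2 • x} ∧ B = {-x, x, 3 • x} ∧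
    (A + B).ncard ≤ 5 ∧ 5 < A.ncard + B.ncard := by
  have hodd' : Odd (Nat.card G) := Nat.card_eq_fintype_card (α := G) ▸ hodd
  have h2x : 2 • x ≠ 0 := two_nsmul_ne_zero_of_odd_card hodd' hx
  have h4x : 2 • 2 • x ≠ 0 := two_nsmul_ne_zero_of_odd_card hodd' h2x
  have hB' : B = x +ᵥ A := hB.trans Set.singleton_add
  have h0A : (0 : G) ∈ A := by simp [hA]
  have hnegxB : -x ∈ B := hrf.neg_mem_of_eq_vadd hcover hAB hB' h0A
  have h2xA : 2 • x ∈ A := hrf.two_nsmul_mem_of_eq_vadd hcover hAB hB' h0A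
  have hneg2xA : -(2 • x) ∈ A := by
    rwa [hB', Set.mem_vadd_set_iff_neg_vadd_mem, vadd_eq_add, ← neg_add, ← two_nsmul] at hnegxB
  have hAeq : A = {-(2 • x), 0, 2 • x} := by
    refine (Set.eq_of_subset_of_ncard_le ?_ ?_ (Set.toFinite _)).symm
    · exact Set.insert_subset hneg2xA <| Set.insert_subset h0A <| Set.singleton_subset_iff.mpr h2xA
    · rw [ncard_neg_zero_self_eq_three h2x h4x, hA]
      exact ncard_le_three _ _ _
  have hBeq : B = {-x, x, 3 • x} := by
    have hleft : x + -(2 • x) = -x := by rw [two_nsmul]; abel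
    have hright : x + 2 • x = 3 • x := by rw [← succ_nsmul']
    rw [hB', hAeq]
    simp only [Set.vadd_set_insert, Set.vadd_set_singleton, vadd_eq_add, hleft, add_zero, hright]
  refine ⟨hnegxB, hAeq, hBeq, hAeq ▸ hBeq ▸ ncard_ap_add_ap_le_five x, ?_⟩
  rw [hB', Set.ncard_vadd_set, hAeq, ncard_neg_zero_self_eq_three h2x h4x]
  norm_num

theorem translate_class_structure {G : Type*} [AddCommGroup G] [Fintype G]
    (hodd : Odd (Fintype.card G)) (A B C : Set G)
    (hcover : A ∪ B ∪ C = Set.univ)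
    (hAB : Disjoint A B) (hAC : Disjoint A C) (hBC : Disjoint B C)
    (hrf : RainbowFree A B C)
    (a a' x : G) (ha : a ≠ 0) (ha' : a' ≠ 0) (haa : a ≠ a') (hx : x ≠ 0)
    (hA : A = {0, a, a'}) (hB : B = {x} + A) :
    -x ∈ B ∧ A = {-(2 • x), 0, 2 • x} ∧ B = {-x, x, 3 • x} ∧
    (A + B).ncard ≤ 5 ∧ 5 < A.ncard + B.ncard :=
  translate_class_structure_general hodd A B C hcover hAB hrf a a' x hx hA hB
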